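/- Let A be a natural number. Then the number of triples (a,b,c) of natural numbers satisfying a ≤ b, b ≤ c, c ≤ A, and a + A + 2 ≤ b + c equals ⌊A(A+2)(2A−1)/24⌋, where 2A−1 is computed in ℤ and ⌊·⌋ denotes the integer floor of the quotient. -/

import Mathlib

open Finset

private def F (A : ℕ) : Finset (ℕ × ℕ × ℕ) :=
  (Finset.range (A+1) ×ˢ Finset.range (A+1) ×ˢ Finset.range (A+1)).filter
    fun p => p.1 ≤ p.2.1 ∧ p.2.1 ≤ p.2.2 ∧ p.2.2 ≤ A ∧ p.1 + A + 2 ≤ p.2.1 + p.2.2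

private lemma memF {A : ℕ} {p : ℕ × ℕ × ℕ} :
    p ∈ F A ↔ p.1 ≤ p.2.1 ∧ p.2.1 ≤ p.2.2 ∧ p.2.2 ≤ A ∧ p.1 + A + 2 ≤ p.2.1 + p.2.2 := by
  obtain ⟨a, b, c⟩ := p
  simp only [F, Finset.mem_filter, Finset.mem_product, Finset.mem_range]
  omega

private lemma top_card (A : ℕ) :
    ((F (A+2)).filter fun p => p.2.2 = A+2).card = ∑ i ∈ range (A+2), i := by
  have h := Finset.card_eq_sum_card_fiberwise
    (f := fun p : ℕ × ℕ × ℕ => p.1) (s := (F (A+2)).filter fun p => p.2.2 = A+2)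
    (t := range (A+3)) (by
      intro p hp
      simp only [Finset.mem_coe, Finset.mem_filter, memF] at hp
      simp only [Finset.mem_coe, Finset.mem_range]
      omega)
  rw [h]
  have hfib : ∀ a ∈ range (A+3),
      (((F (A+2)).filter fun p => p.2.2 = A+2).filter fun p => p.1 = a).card = A + 1 - a := by
    intro a _
    have heq : (((F (A+2)).filter fun p => p.2.2 = A+2).filter fun p => p.1 = a)
        = (Finset.Icc (a+2) (A+2)).image (fun b => (a, b, A+2)) := by
      ext ⟨x, y, z⟩
      simp only [Finset.mem_filter, memF, Finset.mem_image, Finset.mem_Icc, Prod.mk.injEq]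
      constructor
      · rintro ⟨⟨h1, h2⟩, h3⟩
        exact ⟨y, by omega, by omega, by omega, by omega⟩
      · rintro ⟨b, hb, rfl, rfl, rfl⟩
        omega
    rw [heq, Finset.card_image_of_injective _ (fun x y h => by
      simpa [Prod.ext_iff] using h), Nat.card_Icc]
    omega
  rw [Finset.sum_congr rfl hfib]
  have h2 : ∑ a ∈ range (A+3), (A + 1 - a) = ∑ a ∈ range (A+2), (A + 1 - a) := by
    rw [Finset.sum_range_succ]; omega
  rw [h2]
  have h3 := Finset.sum_range_reflect (fun i => i) (A+2)
  rw [← h3]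
  apply Finset.sum_congr rfl
  intro i hi
  simp only [Finset.mem_range] at hi
  omega

private lemma rest_eq (A : ℕ) :
    ((F (A+2)).filter fun p => ¬ p.2.2 = A+2)
      = (F A).image (fun p => (p.1, p.2.1 + 1, p.2.2 + 1)) := by
  ext ⟨a, b, c⟩
  simp only [Finset.mem_filter, memF, Finset.mem_image, Prod.mk.injEq]
  constructor
  · rintro ⟨⟨h1, h2, h3, h4⟩, h5⟩
    refine ⟨(a, b - 1, c - 1), ?_, ?_⟩ <;> dsimp only <;> omega
  · rintro ⟨⟨x, y, z⟩, hq, rfl, rfl, rfl⟩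
    simp only [memF] at hq
    dsimp only at hq ⊢
    omega

private lemma step (A : ℕ) :
    (F (A+2)).card = (F A).card + ∑ i ∈ range (A+2), i := by
  have hsplit := Finset.card_filter_add_card_filter_not
    (s := F (A+2)) (p := fun p => p.2.2 = A+2)
  have himg : ((F (A+2)).filter fun p => ¬ p.2.2 = A+2).card = (F A).card := by
    rw [rest_eq, Finset.card_image_of_injective]
    intro p q h
    simp only [Prod.mk.injEq] at h
    exact Prod.ext h.1 (Prod.ext (by omega) (by omega))
  have htop := top_card A
  omega

private lemma main_card : ∀ A : ℕ, ((F A).card : ℤ) = (A : ℤ) * ((A : ℤ) + 2) * (2 * (A : ℤ) - 1) / 24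
  | 0 => by
    have h : (F 0).card = 0 := by decide
    rw [h]; norm_num
  | 1 => by
    have h : (F 1).card = 0 := by decide
    rw [h]; norm_num
  | (A+2) => by
    have ih := main_card A
    have htriN : (∑ i ∈ range (A+2), i) * 2 = (A+2) * (A+1) := by
      have h1 : A + 2 - 1 = A + 1 := rfl
      rw [Finset.sum_range_id_mul_two, h1]
    rw [step A]
    push_cast
    rw [ih]
    set t : ℤ := ∑ x ∈ range (A+2), (x : ℤ) with ht
    have htri' : t * 2 = ((A:ℤ)+2) * ((A:ℤ)+1) := by
      have : t = ((∑ i ∈ range (A+2), i : ℕ) : ℤ) := by rw [ht]; push_cast; rfl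
      rw [this]; exact_mod_cast htriN
    have hnum : ((A:ℤ)+2) * (((A:ℤ)+2) + 2) * (2 * ((A:ℤ)+2) - 1)
        = (A:ℤ) * ((A:ℤ) + 2) * (2 * (A:ℤ) - 1) + t * 24 := by
      linear_combination (-12 : ℤ) * htri'
    rw [hnum, Int.add_mul_ediv_right _ _ (by norm_num : (24:ℤ) ≠ 0)]

theorem region_count_all_equal (A : ℕ) :
    ({(a, b, c) : ℕ × ℕ × ℕ |
        a ≤ b ∧ b ≤ c ∧ c ≤ A ∧ a + A + 2 ≤ b + c}.ncard : ℤ) =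
      (A : ℤ) * ((A : ℤ) + 2) * (2 * (A : ℤ) - 1) / 24 := by
  have hset : {(a, b, c) : ℕ × ℕ × ℕ |
      a ≤ b ∧ b ≤ c ∧ c ≤ A ∧ a + A + 2 ≤ b + c} = ↑(F A) := by
    ext ⟨a, b, c⟩
    simp only [Set.mem_setOf_eq, Finset.mem_coe, memF]
  rw [hset, Set.ncard_coe_finset, main_card]
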